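/- For all natural numbers n, the sum over k from 0 to n of (1 - (n - 2k)*H_k) / C(n,k) equals (n+1) * H_{n+1}. -/

import Mathlib

open Finset

def harmonicQ (m : Nat) : ℚ := ∑ j ∈ Finset.range m, (1 : ℚ) / (j + 1)

/-!
The summand is a forward difference: with `T k = (n + 1 - k) H_k / C(n, k)` one has
`(1 - (n - 2k) H_k) / C(n, k) = T (k + 1) - T k` for `k < n`, by `H_{k+1} = H_k + 1/(k+1)` and
`C(n, k+1) = C(n, k) (n - k) / (k + 1)`. The sum over `k < n` telescopes to `T n - T 0 = H_n`,
and the term `k = n` contributes `1 + n H_n`.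
-/

@[simp]
lemma harmonicQ_zero : harmonicQ 0 = 0 := rfl

lemma harmonicQ_succ (m : ℕ) : harmonicQ (m + 1) = harmonicQ m + 1 / (m + 1) := by
  simp [harmonicQ, sum_range_succ]

lemma cast_choose_succ_right {K : Type*} [Field K] [CharZero K] {n k : ℕ} (hk : k ≤ n) :
    (n.choose (k + 1) : K) = n.choose k * ((n : K) - k) / (k + 1) := by
  rw [eq_div_iff (Nat.cast_add_one_ne_zero k), ← Nat.cast_sub hk]
  exact_mod_cast Nat.choose_succ_right_eq n k

def telescopeTerm (n k : ℕ) : ℚ := ((n : ℚ) + 1 - k) * harmonicQ k / n.choose k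

lemma summand_eq_telescopeTerm_sub {n k : ℕ} (hk : k < n) :
    (1 - ((n : ℚ) - 2 * k) * harmonicQ k) / (n.choose k : ℚ)
      = telescopeTerm n (k + 1) - telescopeTerm n k := by
  have hchoose : (n.choose k : ℚ) ≠ 0 := by exact_mod_cast (Nat.choose_pos hk.le).ne'
  have hnk : (n : ℚ) - k ≠ 0 := sub_ne_zero.mpr (by exact_mod_cast hk.ne')
  rw [telescopeTerm, telescopeTerm, cast_choose_succ_right hk.le, harmonicQ_succ]
  push_cast
  field_simp
  ring

lemma sum_range_summand_eq_harmonicQ (n : ℕ) :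
    ∑ k ∈ range n, (1 - ((n : ℚ) - 2 * k) * harmonicQ k) / (n.choose k : ℚ) = harmonicQ n := by
  rw [sum_congr rfl fun k hk => summand_eq_telescopeTerm_sub (mem_range.mp hk),
    sum_range_sub (telescopeTerm n)]
  simp [telescopeTerm]

theorem stmt18 (n : ℕ) :
    ∑ k ∈ range (n + 1), (1 - ((n : ℚ) - 2 * k) * harmonicQ k) / (n.choose k : ℚ)
      = ((n : ℚ) + 1) * harmonicQ (n + 1) := by
  rw [sum_range_succ, sum_range_summand_eq_harmonicQ, Nat.choose_self, harmonicQ_succ]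
  field_simp
  ring
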